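/- Let φ : [-h,h] → ℝ satisfy φ'' + (λ - q(x))φ = 0 on [-h,h] with q ∈ L^∞([-h,h]), φ(0) = 1, φ'(0) = 0, and suppose d² ≥ 0. Then | φ'(h)² + (λ - d²)φ(h)² - (λ - d²) | ≤ 2 (‖q‖_∞ + d²) ∫₀ʰ |φ(x) φ'(x)| dx. -/

import Mathlib

open MeasureTheory intervalIntegral

/-! The energy `E = φ'² + (λ - d²) φ²` has derivative `2 φ' (φ'' + (λ - d²) φ)`, which the
equation turns into `2 (q - d²) φ φ'`. Integrating over `[0, h]` and using `E(0) = λ - d²`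
bounds `|E(h) - E(0)|` by `2 sup |q - d²| ∫₀ʰ |φ φ'|`. -/

variable {φ : ℝ → ℝ}

theorem ContDiff.contDiff_one_deriv (hφ : ContDiff ℝ 2 φ) : ContDiff ℝ 1 (deriv φ) :=
  (contDiff_succ_iff_deriv.mp hφ).2.2

theorem hasDerivAt_energy (hφ : ContDiff ℝ 2 φ) (c x : ℝ) :
    HasDerivAt (fun y => deriv φ y ^ 2 + c * φ y ^ 2)
      (2 * deriv φ x * (deriv (deriv φ) x + c * φ x)) x := by
  have hφ' := (hφ.contDiff_one_deriv.differentiable one_ne_zero x).hasDerivAt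
  have hφ₀ := (hφ.differentiable two_ne_zero x).hasDerivAt
  refine ((hφ'.fun_pow 2).fun_add ((hφ₀.fun_pow 2).const_mul c)).congr_deriv ?_
  simp only [Nat.cast_ofNat, Nat.add_one_sub_one, pow_one]
  ring

theorem energy_sub_energy_eq_integral (hφ : ContDiff ℝ 2 φ) (c a b : ℝ) :
    (deriv φ b ^ 2 + c * φ b ^ 2) - (deriv φ a ^ 2 + c * φ a ^ 2) =
      ∫ x in a..b, 2 * deriv φ x * (deriv (deriv φ) x + c * φ x) := by
  refine (integral_eq_sub_of_hasDerivAt (fun x _ => hasDerivAt_energy hφ c x) ?_).symm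
  have := hφ.continuous
  have := hφ.continuous_deriv one_le_two
  have := hφ.contDiff_one_deriv.continuous_deriv le_rfl
  exact (by fun_prop : Continuous _).intervalIntegrable a b

theorem abs_energy_deriv_le_of_ode {q : ℝ → ℝ} {lam d2 M x : ℝ} (hd2 : 0 ≤ d2)
    (hq : |q x| ≤ M) (hode : deriv (deriv φ) x + (lam - q x) * φ x = 0) :
    |2 * deriv φ x * (deriv (deriv φ) x + (lam - d2) * φ x)|
      ≤ 2 * (M + d2) * |φ x * deriv φ x| := by
  have hqd : |q x - d2| ≤ M + d2 :=
    calc |q x - d2| ≤ |q x| + |d2| := abs_sub _ _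
      _ ≤ M + d2 := by rw [abs_of_nonneg hd2]; linarith
  rw [show 2 * deriv φ x * (deriv (deriv φ) x + (lam - d2) * φ x)
      = 2 * (q x - d2) * (φ x * deriv φ x) by linear_combination 2 * deriv φ x * hode,
    abs_mul, abs_mul, abs_two]
  gcongr

/-- Energy identity estimate for the symmetric mode `φ_s`:
`φ(0) = 1`, `φ'(0) = 0`. -/
theorem stmt_1 (q φ : ℝ → ℝ) (h lam d2 M : ℝ) (hh : 0 < h)
    (hd2 : 0 ≤ d2) (hM : ∀ x ∈ Set.Icc (-h) h, |q x| ≤ M)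
    (hφ : ContDiff ℝ 2 φ)
    (hode : ∀ x ∈ Set.Icc (-h) h,
      deriv (deriv φ) x + (lam - q x) * φ x = 0)
    (h0 : φ 0 = 1) (h0' : deriv φ 0 = 0) :
    |deriv φ h ^ 2 + (lam - d2) * φ h ^ 2 - (lam - d2)|
      ≤ 2 * (M + d2) * ∫ x in (0:ℝ)..h, |φ x * deriv φ x| := by
  have hbound : ∀ x ∈ Set.Ioc 0 h,
      ‖2 * deriv φ x * (deriv (deriv φ) x + (lam - d2) * φ x)‖
        ≤ 2 * (M + d2) * |φ x * deriv φ x| := fun x hx =>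
    have hx' : x ∈ Set.Icc (-h) h := ⟨by linarith [hx.1], hx.2⟩
    abs_energy_deriv_le_of_ode hd2 (hM x hx') (hode x hx')
  have hint : IntervalIntegrable (fun x => 2 * (M + d2) * |φ x * deriv φ x|) volume 0 h := by
    have := hφ.continuous
    have := hφ.continuous_deriv one_le_two
    exact (by fun_prop : Continuous _).intervalIntegrable 0 h
  have henergy : deriv φ h ^ 2 + (lam - d2) * φ h ^ 2 - (lam - d2)
      = ∫ x in (0:ℝ)..h, 2 * deriv φ x * (deriv (deriv φ) x + (lam - d2) * φ x) := by
    simpa [h0, h0'] using energy_sub_energy_eq_integral hφ (lam - d2) 0 h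
  rw [henergy, ← intervalIntegral.integral_const_mul]
  exact norm_integral_le_of_norm_le hh.le (ae_of_all _ hbound) hint
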